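/- Let k ≥ 3, let λ and μ be distinct partitions of m with pet_k(λ) ≠ 0 and pet_k(μ) ≠ 0, and let λ⁺ be a partition with λ⁺_1 < k such that both λ⁺/λ and λ⁺/μ are rim hooks of size n. If k divides n, then (-1)^{ht(λ⁺/λ)} pet_k(λ) = (-1)^{ht(λ⁺/μ)} pet_k(μ). -/

import Mathlib

/-!
Pad the Petrie matrix of `λ` to `N = ℓ(λ⁺)` rows and read it as a `k`-abacus: row `i` is the
window of `k` consecutive columns starting at the bead `i - λᵢ`, and all beads lie in `(-k, N)`.
Removing a rim hook of size `n` from `λ⁺` moves one bead `n` steps along its runner, and sorting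
the rows again costs exactly `(-1)^ht`. The windows of a whole runner add up to the all-ones
vector; hence if `pet_k(λ) ≠ 0` the `k - 1` gaps have distinct residues, and expanding the moved
row along its runner gives `(-1)^ht(λ⁺/λ) pet_k(λ) = -pet_k(λ⁺)`, for `μ` just as for `λ`.
-/

open scoped Classical

namespace Petrie

/-- An integer partition, encoded as a weakly decreasing, eventually zero
function `ℕ → ℕ` (0-indexed parts: `parts i` is the `(i+1)`-st part). -/
structure Partition where
  parts : ℕ → ℕ
  antitone : ∀ ⦃i j : ℕ⦄, i ≤ j → parts j ≤ parts i
  fin_supp : ∃ N, ∀ i, N ≤ i → parts i = 0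

/-- The size `|λ|` of a partition. -/
noncomputable def psize (l : Partition) : ℕ := ∑ᶠ i, l.parts i

/-- The number of (nonzero) parts of a partition. -/
noncomputable def length (l : Partition) : ℕ := sInf {i | l.parts i = 0}

/-- The partition whose parts are given by a weakly decreasing list `L`
(of its nonzero entries, possibly padded by zeros). -/
noncomputable def ofList (L : List ℕ) : Partition where
  parts := fun i => (L.drop i).foldr max 0
  antitone := by
    have step : ∀ (M : List ℕ) (i : ℕ),
        (M.drop (i+1)).foldr max 0 ≤ (M.drop i).foldr max 0 := by
      intro M
      induction M with
      | nil => intro i; simp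
      | cons a t ih =>
        intro i
        cases i with
        | zero =>
          simp only [List.drop_succ_cons, List.drop_zero, List.foldr_cons]; exact le_max_right a (t.foldr max 0)
        | succ n => simpa using ih n
    intro i j hij
    induction j, hij using Nat.le_induction with
    | base => exact le_rfl
    | succ n hn ih => exact (step L n).trans ih
  fin_supp := ⟨L.length, by intro i hi; simp [List.drop_eq_nil_of_le hi]⟩

/-- The conjugate (transpose) partition. -/
noncomputable def conj (l : Partition) : Partition where
  parts := fun i => sInf {n | l.parts n ≤ i}
  antitone := by
    intro i j hij
    obtain ⟨N, hN⟩ := l.fin_supp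
    refine csInf_le_csInf (OrderBot.bddBelow _) ⟨N, ?_⟩ ?_
    · simp [hN N le_rfl]
    · intro n hn
      exact le_trans hn hij
  fin_supp := by
    refine ⟨l.parts 0, fun i hi => ?_⟩
    exact Nat.sInf_eq_zero.mpr (Or.inl (le_trans (l.antitone (Nat.zero_le 0)) hi))

/-- The `k`-Petrie number `pet_k(λ) = det[χ(0 ≤ λ_i - i + j < k)]_{i,j=1}^{ℓ(λ)}`. -/
noncomputable def pet (k : ℕ) (l : Partition) : ℤ :=
  Matrix.det (Matrix.of fun i j : Fin (length l) =>
    if (0:ℤ) ≤ (l.parts i : ℤ) - (i:ℕ) + (j:ℕ) ∧ (l.parts i : ℤ) - (i:ℕ) + (j:ℕ) < k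
    then 1 else 0)

/-- The cells of the skew diagram `λ/μ` (rows and columns 0-indexed). -/
def cells (la mu : Partition) : Set (ℕ × ℕ) :=
  {c | mu.parts c.1 ≤ c.2 ∧ c.2 < la.parts c.1}

/-- Rookwise adjacency of two cells. -/
def Adj (c d : ℕ × ℕ) : Prop :=
  (c.1 = d.1 ∧ (c.2 + 1 = d.2 ∨ d.2 + 1 = c.2)) ∨
  (c.2 = d.2 ∧ (c.1 + 1 = d.1 ∨ d.1 + 1 = c.1))

/-- `λ/μ` is a rim hook (border strip) of size `k`: `μ ⊆ λ`, the skew diagram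
has `k` cells, is rookwise connected, and contains no 2×2 square. -/
def IsRimHook (la mu : Partition) (k : ℕ) : Prop :=
  (∀ i, mu.parts i ≤ la.parts i) ∧
  (∑ᶠ i, (la.parts i - mu.parts i)) = k ∧
  (∀ c ∈ cells la mu, ∀ d ∈ cells la mu,
    Relation.ReflTransGen (fun a b => a ∈ cells la mu ∧ b ∈ cells la mu ∧ Adj a b) c d) ∧
  ¬ ∃ i j : ℕ, (i, j) ∈ cells la mu ∧ (i+1, j) ∈ cells la mu ∧
      (i, j+1) ∈ cells la mu ∧ (i+1, j+1) ∈ cells la mu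

/-- The height of a skew shape `λ/μ`: one less than its number of rows. -/
noncomputable def height (la mu : Partition) : ℕ :=
  Set.ncard {i | mu.parts i < la.parts i} - 1

/-- The number of columns of the skew diagram `λ/μ`. -/
noncomputable def cols (la mu : Partition) : ℕ :=
  Set.ncard {j | ∃ i, (i, j) ∈ cells la mu}

/-- `c` is the `k`-core of `λ`: it is obtained from `λ` by successively removing
rim hooks of size `k`, and no further rim hook of size `k` can be removed. -/
def IsCore (k : ℕ) (la c : Partition) : Prop :=
  Relation.ReflTransGen (fun a b => IsRimHook a b k) la c ∧ ∀ b, ¬ IsRimHook c b k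

/-- Dominance order: `Dominates μ λ` means `λ ⊴ μ`. -/
def Dominates (mu la : Partition) : Prop :=
  ∀ r, ∑ i ∈ Finset.range r, la.parts i ≤ ∑ i ∈ Finset.range r, mu.parts i

/-! ### Symmetric functions, realized as formal power series in countably
many variables `x_0, x_1, x_2, …`. -/

/-- The ring of formal power series in the variables `x_i`, `i : ℕ`. -/
abbrev SymFn := MvPowerSeries ℕ ℤ

/-- The total degree of an exponent vector. -/
noncomputable def degree (d : ℕ →₀ ℕ) : ℕ := d.sum fun _ e => e

/-- The complete homogeneous symmetric function `h_m`. -/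
noncomputable def hfun (m : ℕ) : SymFn := fun d => if degree d = m then 1 else 0

/-- `h_n` for an integer index (`0` for negative `n`). -/
noncomputable def hz (n : ℤ) : SymFn := if 0 ≤ n then hfun n.toNat else 0

/-- The elementary symmetric function `e_m`. -/
noncomputable def esymmF (m : ℕ) : SymFn :=
  fun d => if degree d = m ∧ ∀ i, d i ≤ 1 then 1 else 0

/-- The power sum symmetric function `p_n = Σ_i x_i^n`. -/
noncomputable def psumF (n : ℕ) : SymFn :=
  fun d => if ∃ i, d = Finsupp.single i n then 1 else 0

/-- The Petrie symmetric function `G(k,m)`, i.e. the degree-`m` part of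
`Π_i (1 + x_i + x_i^2 + ⋯ + x_i^{k-1})`. -/
noncomputable def G (k m : ℕ) : SymFn :=
  fun d => if degree d = m ∧ ∀ i, d i < k then 1 else 0

/-- The monomial symmetric function `m_λ`. -/
noncomputable def msym (l : Partition) : SymFn :=
  fun d => if Multiset.map (fun i => d i) d.support.val =
      Multiset.map l.parts (Multiset.range (length l)) then 1 else 0

/-- The Schur function `s_λ`, via the Jacobi–Trudi determinant
`s_λ = det[h_{λ_i - i + j}]_{i,j=1}^{ℓ(λ)}`. -/
noncomputable def schur (l : Partition) : SymFn :=
  Matrix.det (Matrix.of fun i j : Fin (length l) =>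
    hz ((l.parts i : ℤ) - (i:ℕ) + (j:ℕ)))

/-- The representative in `{1, …, k}` of `x` modulo `k`. -/
noncomputable def resid (k : ℕ) (x : ℤ) : ℤ := if x % (k:ℤ) = 0 then (k:ℤ) else x % (k:ℤ)

/-- `β_i = λᶜ_i - i` (1-indexed `i`). -/
noncomputable def betaSeq (l : Partition) (i : ℕ) : ℤ := ((conj l).parts (i-1) : ℤ) - (i:ℤ)

/-- `γ_i ∈ {1, …, k}`, `γ_i ≡ λᶜ_i - i (mod k)` (1-indexed `i`). -/
noncomputable def gammaSeq (k : ℕ) (l : Partition) (i : ℕ) : ℤ := resid k (betaSeq l i)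

/-- The number of non-inversions of the sequence `γ_1, …, γ_{k-1}`. -/
noncomputable def ninv (k : ℕ) (g : ℕ → ℤ) : ℕ :=
  (((Finset.Icc 1 (k-1)) ×ˢ (Finset.Icc 1 (k-1))).filter
    (fun p => p.1 < p.2 ∧ g p.1 < g p.2)).card

end Petrie

open Finset

theorem Matrix.det_updateRow_sum_sub_sum {n R : Type*} [Fintype n] [DecidableEq n] [CommRing R]
    (M : Matrix n n R) (j : n) (S T : Finset n) :
    (M.updateRow j (∑ i ∈ S, M i - ∑ i ∈ T, M i)).det =
      ((if j ∈ S then 1 else 0) - (if j ∈ T then 1 else 0)) * M.det := by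
  have hsum : ∀ U : Finset n, ∑ i ∈ U, M i = ∑ i, (if i ∈ U then (1 : R) else 0) • M i := by
    intro U
    simp only [ite_smul, one_smul, zero_smul]
    rw [sum_ite_mem (f := fun i => M i), univ_inter]
  rw [hsum S, hsum T, ← sum_sub_distrib]
  simp_rw [← sub_smul]
  exact Matrix.det_updateRow_sum M j _

theorem Matrix.det_eq_zero_of_sum_rows_eq {n R : Type*} [Fintype n] [DecidableEq n] [CommRing R]
    {M : Matrix n n R} {S T : Finset n} (hST : ∑ i ∈ S, M i = ∑ i ∈ T, M i) (hS : ¬ S ⊆ T) :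
    M.det = 0 := by
  obtain ⟨i₀, hi₀S, hi₀T⟩ := not_subset.mp hS
  have hrow : M i₀ = ∑ i ∈ T, M i - ∑ i ∈ S.erase i₀, M i := by
    rw [← hST, ← add_sum_erase S M hi₀S, add_sub_cancel_right]
  rw [← M.updateRow_eq_self i₀, hrow, Matrix.det_updateRow_sum_sub_sum]
  simp [hi₀T]

namespace Petrie

section Windows

variable {k N : ℕ}

noncomputable def window (k N : ℕ) (x : ℤ) : Fin N → ℤ :=
  fun j => if x ≤ j ∧ (j : ℤ) < x + k then 1 else 0

noncomputable def windowMatrix (k : ℕ) (b : Fin N → ℤ) : Matrix (Fin N) (Fin N) ℤ :=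
  Matrix.of fun i => window k N (b i)

/-- A runner of the `k`-abacus, cut down to the positions whose window meets the columns
`0, …, N - 1`. -/
noncomputable def runner (k N : ℕ) (c : ℤ) : Finset ℤ :=
  (Ioo (-(k : ℤ)) N).filter (· ≡ c [ZMOD k])

noncomputable def gaps (k : ℕ) (b : Fin N → ℤ) : Finset ℤ :=
  Ioo (-(k : ℤ)) N \ univ.image b

/-- Column `j` lies in exactly one window of the runner, the one starting at `j - (j - c) % k`. -/
theorem sum_window_runner (hk : 0 < k) (c : ℤ) : ∑ x ∈ runner k N c, window k N x = 1 := by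
  funext j
  simp only [Finset.sum_apply, window, Pi.one_apply]
  rw [sum_boole, Nat.cast_eq_one, card_eq_one]
  refine ⟨j - (j - c) % k, ?_⟩
  have hk' : (0 : ℤ) < k := by exact_mod_cast hk
  have h0 := Int.emod_nonneg (j - c) hk'.ne'
  have h1 := Int.emod_lt_of_pos (j - c) hk'
  have hjN : (j : ℤ) < N := by exact_mod_cast j.isLt
  have hstart : j - (j - c) % k ≡ c [ZMOD k] :=
    ((Int.mod_modEq (j - c) k).sub_left j).trans (by simp)
  ext x
  simp only [runner, mem_filter, mem_Ioo, mem_singleton]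
  constructor
  · rintro ⟨⟨-, hx⟩, hxj, hjx⟩
    have := Int.eq_zero_of_abs_lt_dvd (hx.trans hstart.symm).dvd (by rw [abs_lt]; omega)
    omega
  · rintro rfl
    exact ⟨⟨⟨by omega, by omega⟩, hstart⟩, by omega, by omega⟩

theorem windowMatrix_update (a : Fin N → ℤ) (s : Fin N) (g : ℤ) :
    windowMatrix k (Function.update a s g) = (windowMatrix k a).updateRow s (window k N g) := by
  ext i j
  rcases eq_or_ne i s with rfl | hi <;> simp [windowMatrix, *]

theorem injective_of_det_windowMatrix_ne_zero {b : Fin N → ℤ} (h : (windowMatrix k b).det ≠ 0) :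
    Function.Injective b := by
  intro i j hij
  by_contra hne
  exact h (Matrix.det_zero_of_row_eq hne (congrArg (window k N) hij))

theorem card_gaps {b : Fin N → ℤ} (hb : Function.Injective b)
    (hbW : ∀ i, b i ∈ Ioo (-(k : ℤ)) N) : #(gaps k b) = k - 1 := by
  have hsub : univ.image b ⊆ Ioo (-(k : ℤ)) N := by
    rintro _ hx
    obtain ⟨i, -, rfl⟩ := mem_image.mp hx
    exact hbW i
  rw [gaps, card_sdiff_of_subset hsub, card_image_of_injective _ hb, Int.card_Ioo, card_univ,
    Fintype.card_fin]
  omega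

theorem exists_residue_notMem_gaps (hk : 0 < k) {b : Fin N → ℤ} (hb : Function.Injective b)
    (hbW : ∀ i, b i ∈ Ioo (-(k : ℤ)) N) :
    ∃ c ∈ Ico 0 (k : ℤ), c ∉ (gaps k b).image (· % (k : ℤ)) := by
  refine exists_mem_notMem_of_card_lt_card ?_
  have := (card_image_le (s := gaps k b) (f := (· % (k : ℤ)))).trans_eq (card_gaps hb hbW)
  rw [Int.card_Ico]
  omega

theorem sum_windowMatrix_runner_add_sum_gaps (hk : 0 < k) {b : Fin N → ℤ}
    (hb : Function.Injective b) (c : ℤ) :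
    ∑ i ∈ univ.filter (fun i => b i ∈ runner k N c), windowMatrix k b i +
      ∑ x ∈ (gaps k b).filter (· ≡ c [ZMOD k]), window k N x = 1 := by
  have hbeads :
      (univ.filter fun i => b i ∈ runner k N c).image b = runner k N c ∩ univ.image b := by
    ext x
    simp only [mem_image, mem_filter, mem_univ, true_and, mem_inter]
    constructor
    · rintro ⟨i, hi, rfl⟩
      exact ⟨hi, i, rfl⟩
    · rintro ⟨hx, i, rfl⟩
      exact ⟨i, hx, rfl⟩
  have hgaps : (gaps k b).filter (· ≡ c [ZMOD k]) = runner k N c \ univ.image b := by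
    ext x
    simp only [gaps, runner, mem_filter, mem_sdiff]
    tauto
  rw [← sum_window_runner hk c, ← sum_inter_add_sum_sdiff (runner k N c) (univ.image b), hgaps,
    ← hbeads, sum_image hb.injOn]
  rfl

theorem sum_windowMatrix_runner_eq_one (hk : 0 < k) {b : Fin N → ℤ} (hb : Function.Injective b)
    {c : ℤ} (hc : c ∈ Ico 0 (k : ℤ)) (hfree : c ∉ (gaps k b).image (· % (k : ℤ))) :
    ∑ i ∈ univ.filter (fun i => b i ∈ runner k N c), windowMatrix k b i = 1 := by
  have hempty : (gaps k b).filter (· ≡ c [ZMOD k]) = ∅ := by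
    refine filter_eq_empty_iff.mpr fun x hx hxc => hfree (mem_image.mpr ⟨x, hx, ?_⟩)
    rw [mem_Ico] at hc
    rw [hxc.eq, Int.emod_eq_of_lt hc.1 hc.2]
  simpa [hempty] using sum_windowMatrix_runner_add_sum_gaps hk hb c

/-- A residue repeated among the `k - 1` gaps leaves two residues free, and the rows on either
free runner add up to the all-ones vector. -/
theorem gaps_injOn_emod (hk : 0 < k) (hN : 0 < N) {b : Fin N → ℤ}
    (hbW : ∀ i, b i ∈ Ioo (-(k : ℤ)) N) (hdet : (windowMatrix k b).det ≠ 0) :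
    Set.InjOn (· % (k : ℤ)) (gaps k b) := by
  have hb := injective_of_det_windowMatrix_ne_zero hdet
  by_contra hinj
  set R := (gaps k b).image (· % (k : ℤ))
  have hR : #R + 1 < #(Ico 0 (k : ℤ)) := by
    have hlt : #R < #(gaps k b) := lt_of_le_of_ne card_image_le (mt card_image_iff.mp hinj)
    rw [card_gaps hb hbW] at hlt
    rw [Int.card_Ico]
    omega
  obtain ⟨c₀, hc₀, hc₀R⟩ := exists_residue_notMem_gaps hk hb hbW
  obtain ⟨c₁, hc₁, hc₁R⟩ := exists_mem_notMem_of_card_lt_card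
    ((card_insert_le c₀ R).trans_lt hR)
  rw [mem_insert, not_or] at hc₁R
  have hS₀ := sum_windowMatrix_runner_eq_one hk hb hc₀ hc₀R
  have hS₁ := sum_windowMatrix_runner_eq_one hk hb hc₁ hc₁R.2
  refine hdet (Matrix.det_eq_zero_of_sum_rows_eq (hS₀.trans hS₁.symm) fun hsub => ?_)
  obtain ⟨i, hi⟩ :=
    nonempty_of_sum_ne_zero (hS₀.trans_ne fun h => by simpa using congrFun h ⟨0, hN⟩)
  have h₀ := (mem_filter.mp hi).2
  have h₁ := (mem_filter.mp (hsub hi)).2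
  simp only [runner, mem_filter] at h₀ h₁
  rw [mem_Ico] at hc₀ hc₁
  have := (h₀.2.symm.trans h₁.2).eq
  rw [Int.emod_eq_of_lt hc₀.1 hc₀.2, Int.emod_eq_of_lt hc₁.1 hc₁.2] at this
  exact hc₁R.1 this.symm

theorem update_mem_Ioo {a : Fin N → ℤ} (haW : ∀ i, a i ∈ Ioo (-(k : ℤ)) N) {s : Fin N} {g : ℤ}
    (hgW : g ∈ Ioo (-(k : ℤ)) N) (i : Fin N) : Function.update a s g i ∈ Ioo (-(k : ℤ)) N := by
  rcases eq_or_ne i s with rfl | hi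
  · simpa using hgW
  · simpa [hi] using haW i

theorem mem_gaps_update {a : Fin N → ℤ} (ha : Function.Injective a)
    (haW : ∀ i, a i ∈ Ioo (-(k : ℤ)) N) {s : Fin N} {g : ℤ} (hgs : g ≠ a s) :
    a s ∈ gaps k (Function.update a s g) := by
  refine mem_sdiff.mpr ⟨haW s, fun h => ?_⟩
  obtain ⟨i, -, hi⟩ := mem_image.mp h
  rcases eq_or_ne i s with rfl | hne
  · exact hgs (by simpa using hi)
  · exact hne (ha (by simpa [hne] using hi))

/-- The runner of `g` holds the beads of `a` and, after the move, no gap but `a s`. -/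
theorem window_eq_one_sub_sum_runner (hk : 0 < k) {a : Fin N → ℤ} (ha : Function.Injective a)
    (haW : ∀ i, a i ∈ Ioo (-(k : ℤ)) N) {s : Fin N} {g : ℤ} (hgW : g ∈ Ioo (-(k : ℤ)) N)
    (hg : g ≡ a s [ZMOD k]) (hgs : g ≠ a s)
    (hdet : (windowMatrix k (Function.update a s g)).det ≠ 0) :
    window k N g = 1 - ∑ i ∈ univ.filter (fun i => a i ∈ runner k N g), windowMatrix k a i := by
  set b := Function.update a s g
  set J := univ.filter (fun i => a i ∈ runner k N g)
  have has := mem_gaps_update (k := k) ha haW hgs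
  have hgaps := gaps_injOn_emod hk (Fin.pos s) (update_mem_Ioo haW hgW) hdet
  have hsJ : s ∈ J := by simpa [J, runner] using ⟨mem_Ioo.mp (haW s), hg.symm⟩
  have hJ : univ.filter (fun i => b i ∈ runner k N g) = J := by
    refine filter_congr fun i _ => ?_
    rcases eq_or_ne i s with rfl | hi
    · simpa [b, runner, mem_Ioo.mp hgW] using ⟨mem_Ioo.mp (haW i), hg.symm⟩
    · simp [b, hi]
  have hgapsg : (gaps k b).filter (· ≡ g [ZMOD k]) = {a s} := by
    refine eq_singleton_iff_unique_mem.mpr ⟨mem_filter.mpr ⟨has, hg.symm⟩, fun x hx => ?_⟩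
    obtain ⟨hx, hxg⟩ := mem_filter.mp hx
    exact hgaps hx has (hxg.trans hg).eq
  have hrow : ∀ i ≠ s, windowMatrix k b i = windowMatrix k a i := fun i hi =>
    congrArg (window k N) (Function.update_of_ne hi g a)
  have hone :=
    sum_windowMatrix_runner_add_sum_gaps hk (injective_of_det_windowMatrix_ne_zero hdet) g
  rw [hJ, hgapsg, sum_singleton, ← add_sum_erase J (fun i => windowMatrix k b i) hsJ,
    sum_congr rfl fun i hi => hrow i (ne_of_mem_erase hi)] at hone
  have hbs : windowMatrix k b s = window k N g := congrArg (window k N) (Function.update_self s g a)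
  rw [← hone, hbs, ← add_sum_erase J (fun i => windowMatrix k a i) hsJ]
  change _ = _ - (window k N (a s) + _)
  abel

/-- `1` is the sum of the rows on a runner without gaps, so expanding the moved row along the
runner of `g` leaves only the old row `a s`, with coefficient `-1`. -/
theorem det_windowMatrix_update_eq_neg (hk : 0 < k) {a : Fin N → ℤ} (ha : Function.Injective a)
    (haW : ∀ i, a i ∈ Ioo (-(k : ℤ)) N) {s : Fin N} {g : ℤ} (hgW : g ∈ Ioo (-(k : ℤ)) N)
    (hg : g ≡ a s [ZMOD k]) (hgs : g ≠ a s)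
    (hdet : (windowMatrix k (Function.update a s g)).det ≠ 0) :
    (windowMatrix k (Function.update a s g)).det = -(windowMatrix k a).det := by
  set b := Function.update a s g
  have hb := injective_of_det_windowMatrix_ne_zero hdet
  obtain ⟨c₀, hc₀, hc₀free⟩ := exists_residue_notMem_gaps hk hb (update_mem_Ioo haW hgW)
  set J₀ := univ.filter (fun i => b i ∈ runner k N c₀)
  have hsJ₀ : s ∉ J₀ := by
    intro hs
    have hgc : g ≡ c₀ [ZMOD k] := by
      have hsr := (mem_filter.mp hs).2
      simp only [runner, mem_filter, b, Function.update_self] at hsr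
      exact hsr.2
    rw [mem_Ico] at hc₀
    refine hc₀free (mem_image.mpr ⟨a s, mem_gaps_update ha haW hgs, ?_⟩)
    rw [← Int.emod_eq_of_lt hc₀.1 hc₀.2]
    exact (hg.symm.trans hgc).eq
  have hone₀ : ∑ i ∈ J₀, windowMatrix k a i = 1 := by
    rw [← sum_windowMatrix_runner_eq_one hk hb hc₀ hc₀free]
    exact sum_congr rfl fun i hi =>
      congrArg (window k N) (Function.update_of_ne (ne_of_mem_of_not_mem hi hsJ₀) g a).symm
  rw [windowMatrix_update, window_eq_one_sub_sum_runner hk ha haW hgW hg hgs hdet, ← hone₀,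
    Matrix.det_updateRow_sum_sub_sum]
  have has : a s ∈ runner k N g := mem_filter.mpr ⟨haW s, hg.symm⟩
  simp [hsJ₀, has]

end Windows

namespace Partition

@[ext]
theorem ext {p q : Partition} (h : p.parts = q.parts) : p = q := by
  cases p
  cases q
  simpa using h

theorem parts_eq_zero_iff (l : Partition) {i : ℕ} : l.parts i = 0 ↔ length l ≤ i := by
  have hne : {i | l.parts i = 0}.Nonempty := by
    obtain ⟨N, hN⟩ := l.fin_supp
    exact ⟨N, hN N le_rfl⟩
  refine ⟨fun h => Nat.sInf_le h, fun h => Nat.le_zero.mp ?_⟩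
  exact (Nat.sInf_mem hne : l.parts (length l) = 0) ▸ l.antitone h

/-- Row `i` of the Petrie matrix of `l` is the window starting at column `i - lᵢ`. -/
def windowStart (l : Partition) (i : ℕ) : ℤ := i - l.parts i

theorem windowStart_strictMono (l : Partition) : StrictMono l.windowStart :=
  strictMono_nat_of_lt_succ fun i => by
    have := l.antitone (Nat.le_add_right i 1)
    simp only [windowStart]
    omega

end Partition

theorem det_windowMatrix_of_last_eq {k N : ℕ} (hk : 0 < k) (b : Fin (N + 1) → ℤ)
    (hb : b (Fin.last N) = N) :
    (windowMatrix k b).det = (windowMatrix k (b ∘ Fin.castSucc)).det := by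
  rw [Matrix.det_succ_row _ (Fin.last N), sum_eq_single (Fin.last N)]
  · have hsub : (windowMatrix k b).submatrix (Fin.last N).succAbove (Fin.last N).succAbove =
        windowMatrix k (b ∘ Fin.castSucc) := by
      ext i j
      simp [windowMatrix, window]
    have hlast : windowMatrix k b (Fin.last N) (Fin.last N) = 1 := by
      simp [windowMatrix, window, hb, hk]
    rw [hlast, hsub, Fin.val_last, Even.neg_one_pow ⟨N, rfl⟩, one_mul, one_mul]
  · intro j _ hj
    have := Fin.val_lt_last hj
    simp only [windowMatrix, window, Matrix.of_apply, hb]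
    rw [if_neg (by omega), mul_zero, zero_mul]
  · simp

theorem pet_eq_det_windowMatrix {k : ℕ} (hk : 0 < k) {l : Partition} {N : ℕ} (h : length l ≤ N) :
    pet k l = (windowMatrix k fun i : Fin N => l.windowStart i).det := by
  induction N, h using Nat.le_induction with
  | base =>
    unfold pet
    congr 1
    ext i j
    simp only [Matrix.of_apply, windowMatrix, window, Partition.windowStart]
    refine if_congr ?_ rfl rfl
    constructor <;> rintro ⟨h₁, h₂⟩ <;> constructor <;> omega
  | succ N hN ih =>
    rw [ih, det_windowMatrix_of_last_eq hk]
    · rfl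
    · simp [Partition.windowStart, (Partition.parts_eq_zero_iff l).mpr hN]

namespace IsRimHook

variable {lp la : Partition} {n s t : ℕ}

theorem length_le (hr : IsRimHook lp la n) : length la ≤ length lp := by
  have := hr.1 (length lp)
  rwa [(lp.parts_eq_zero_iff).mpr le_rfl, Nat.le_zero, la.parts_eq_zero_iff] at this

theorem sum_eq_size (hr : IsRimHook lp la n) {S : Finset ℕ}
    (hS : ∀ i, la.parts i < lp.parts i → i ∈ S) :
    ∑ i ∈ S, (lp.parts i - la.parts i) = n := by
  rw [← hr.2.1, finsum_eq_sum_of_support_subset]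
  intro i hi
  exact hS i (Nat.lt_of_sub_ne_zero hi)

theorem size_eq_zero_iff (hr : IsRimHook lp la n) : n = 0 ↔ la = lp := by
  have hS : ∀ i, la.parts i < lp.parts i → i ∈ range (length lp) := fun i hi =>
    mem_range.mpr (not_le.mp fun h => by simp [(lp.parts_eq_zero_iff).mpr h] at hi)
  rw [← hr.sum_eq_size hS, sum_eq_zero_iff, Partition.ext_iff, funext_iff]
  refine ⟨fun h i => ?_, fun h i _ => by simp [h i]⟩
  by_contra hne
  have hlt := lt_of_le_of_ne (hr.1 i) hne
  exact absurd (h i (hS i hlt)) (by omega)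

/-- A path of adjacent cells from row `c.1` to row `d.1` must cross from row `p` to row `p + 1`. -/
theorem exists_vertical_step (hr : IsRimHook lp la n) {c d : ℕ × ℕ} (hc : c ∈ cells lp la)
    (hd : d ∈ cells lp la) {p : ℕ} (hcp : c.1 ≤ p) (hpd : p < d.1) :
    ∃ j, (p, j) ∈ cells lp la ∧ (p + 1, j) ∈ cells lp la := by
  induction hr.2.2.1 c hc d hd using Relation.ReflTransGen.head_induction_on with
  | refl => omega
  | @head x y hxy _ ih =>
    obtain ⟨hx, hy, hadj⟩ := hxy
    by_cases hyp : y.1 ≤ p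
    · exact ih hy hyp
    · rcases hadj with ⟨h, -⟩ | ⟨h, h' | h'⟩
      · omega
      · obtain rfl : x.1 = p := by omega
        exact ⟨x.2, hx, by rwa [h', h]⟩
      · omega

/-- A common column forces `λ⁺_{p+1} > λ_p`, and `λ⁺_{p+1} > λ_p + 1` would put the cells
`(p, λ_p)`, `(p, λ_p + 1)` and the two below them into a 2×2 square. -/
theorem parts_add_one_eq (hr : IsRimHook lp la n) {c d : ℕ × ℕ} (hc : c ∈ cells lp la)
    (hd : d ∈ cells lp la) {p : ℕ} (hcp : c.1 ≤ p) (hpd : p < d.1) :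
    la.parts p + 1 = lp.parts (p + 1) := by
  obtain ⟨j, ⟨hj₁, -⟩, ⟨hj₂, hj₃⟩⟩ := hr.exists_vertical_step hc hd hcp hpd
  dsimp only at hj₁ hj₂ hj₃
  have hla := la.antitone (Nat.le_add_right p 1)
  have hlp := lp.antitone (Nat.le_add_right p 1)
  by_contra hne
  refine hr.2.2.2 ⟨p, la.parts p, ?_, ?_, ?_, ?_⟩ <;> simp only [cells, Set.mem_ofPred_eq] <;> omega

theorem exists_rows_eq_Icc (hr : IsRimHook lp la n) (hn : n ≠ 0) :
    ∃ s t, s ≤ t ∧ t < length lp ∧ {i | la.parts i < lp.parts i} = Set.Icc s t := by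
  set F := (range (length lp)).filter fun i => la.parts i < lp.parts i
  have hF : ∀ i, i ∈ F ↔ la.parts i < lp.parts i := fun i => by
    simp only [F, mem_filter, mem_range, and_iff_right_iff_imp]
    exact fun hi => not_le.mp fun h => by simp [(lp.parts_eq_zero_iff).mpr h] at hi
  have hne : F.Nonempty := by
    by_contra hempty
    refine hn ((hr.size_eq_zero_iff).mpr (Partition.ext (funext fun i => ?_)))
    have := hr.1 i
    have := mt (hF i).mpr fun h => hempty ⟨i, h⟩
    omega
  have hcell : ∀ i ∈ F, (i, la.parts i) ∈ cells lp la := fun i hi => ⟨le_rfl, (hF i).mp hi⟩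
  refine ⟨F.min' hne, F.max' hne, F.min'_le _ (F.max'_mem hne),
    mem_range.mp (mem_filter.mp (F.max'_mem hne)).1, Set.ext fun i => ⟨fun hi => ?_, fun hi => ?_⟩⟩
  · exact ⟨F.min'_le i ((hF i).mpr hi), F.le_max' i ((hF i).mpr hi)⟩
  · obtain ⟨hsi, hit⟩ := hi
    rcases hit.lt_or_eq with hit | rfl
    · have := hr.parts_add_one_eq (hcell _ (F.min'_mem hne)) (hcell _ (F.max'_mem hne)) hsi hit
      have := lp.antitone (Nat.le_add_right i 1)
      exact Nat.lt_of_lt_of_le (by omega) this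
    · exact (hF _).mp (F.max'_mem hne)

theorem windowStart_of_notMem (hr : IsRimHook lp la n)
    (hrows : {i | la.parts i < lp.parts i} = Set.Icc s t) {i : ℕ} (hi : i ∉ Set.Icc s t) :
    la.windowStart i = lp.windowStart i := by
  rw [← hrows, Set.mem_ofPred, not_lt] at hi
  simp [Partition.windowStart, le_antisymm hi (hr.1 i)]

theorem windowStart_eq_succ (hr : IsRimHook lp la n)
    (hrows : {i | la.parts i < lp.parts i} = Set.Icc s t) {i : ℕ} (hsi : s ≤ i) (hit : i < t) :
    la.windowStart i = lp.windowStart (i + 1) := by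
  have hcell : ∀ i ∈ Set.Icc s t, (i, la.parts i) ∈ cells lp la := fun i hi =>
    ⟨le_rfl, by rwa [← hrows] at hi⟩
  have := hr.parts_add_one_eq (hcell s ⟨le_rfl, by omega⟩) (hcell t ⟨by omega, le_rfl⟩) hsi hit
  simp only [Partition.windowStart]
  omega

theorem windowStart_last (hr : IsRimHook lp la n)
    (hrows : {i | la.parts i < lp.parts i} = Set.Icc s t) (hst : s ≤ t) :
    la.windowStart t = lp.windowStart s + n := by
  have hsize := hr.sum_eq_size (S := Ico s (t + 1)) fun i hi => by
    have : i ∈ Set.Icc s t := hrows ▸ hi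
    rw [mem_Ico, Nat.lt_succ_iff]
    exact this
  have hdiff : ∀ i, ((lp.parts i - la.parts i : ℕ) : ℤ) = la.windowStart i - lp.windowStart i :=
    fun i => by
      rw [Nat.cast_sub (hr.1 i), Partition.windowStart, Partition.windowStart]
      ring
  have htel : ∑ i ∈ Ico s t, (la.windowStart i - lp.windowStart i) =
      lp.windowStart t - lp.windowStart s := by
    rw [← sum_Ico_sub _ hst]
    exact sum_congr rfl fun i hi => by
      rw [hr.windowStart_eq_succ hrows (mem_Ico.mp hi).1 (mem_Ico.mp hi).2]
  have hcast := congrArg (Nat.cast : ℕ → ℤ) hsize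
  rw [Nat.cast_sum, sum_Ico_succ_top (by omega)] at hcast
  simp only [hdiff, htel] at hcast
  omega

/-- Removing the rim hook moves the bead at `s - λ⁺ₛ` to `s - λ⁺ₛ + n`; restoring the increasing
order of the beads is the cycle `(s s+1 … t)`. -/
theorem windowStart_eq_update_comp_cycleIcc {N : ℕ} (hr : IsRimHook lp la n)
    (hrows : {i | la.parts i < lp.parts i} = Set.Icc s t) (hst : s ≤ t) (htN : t < N) :
    (fun i : Fin N => la.windowStart i) =
      Function.update (fun i : Fin N => lp.windowStart i) ⟨s, hst.trans_lt htN⟩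
        (lp.windowStart s + n) ∘ Fin.cycleIcc ⟨s, hst.trans_lt htN⟩ ⟨t, htN⟩ := by
  have : NeZero N := ⟨by omega⟩
  funext i
  obtain ⟨i, hi⟩ := i
  simp only [Function.comp_apply]
  by_cases hmem : s ≤ i ∧ i ≤ t
  · rw [Fin.cycleIcc_of_le_of_le (Fin.mk_le_mk.mpr hmem.1) (Fin.mk_le_mk.mpr hmem.2)]
    rcases hmem.2.lt_or_eq with hit | rfl
    · have hne : (⟨i, hi⟩ : Fin N) ≠ ⟨t, htN⟩ := by simp [hit.ne]
      have hsucc : ((⟨i, hi⟩ : Fin N) + 1 : Fin N) = ⟨i + 1, by omega⟩ := by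
        rw [Fin.ext_iff, Fin.val_add, Fin.val_one', Nat.add_mod_mod]
        exact Nat.mod_eq_of_lt (by simp only; omega)
      rw [if_neg hne, hsucc, Function.update_of_ne (Fin.ne_of_val_ne (by simp only; omega))]
      exact hr.windowStart_eq_succ hrows hmem.1 hit
    · rw [if_pos rfl, Function.update_self]
      exact hr.windowStart_last hrows hst
  · have hfix : Fin.cycleIcc (⟨s, hst.trans_lt htN⟩ : Fin N) ⟨t, htN⟩ ⟨i, hi⟩ = ⟨i, hi⟩ := by
      rcases not_and_or.mp hmem with his | hti
      · exact Fin.cycleIcc_of_lt (Fin.mk_lt_mk.mpr (not_le.mp his))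
      · exact Fin.cycleIcc_of_gt (Fin.mk_lt_mk.mpr (not_le.mp hti))
    have hne : (⟨i, hi⟩ : Fin N) ≠ ⟨s, hst.trans_lt htN⟩ :=
      Fin.ne_of_val_ne fun (h : i = s) => hmem ⟨h.ge, h ▸ hst⟩
    rw [hfix, Function.update_of_ne hne]
    exact hr.windowStart_of_notMem hrows hmem

end IsRimHook

theorem height_eq_sub {lp la : Partition} {s t : ℕ}
    (hrows : {i | la.parts i < lp.parts i} = Set.Icc s t) : height lp la = t - s := by
  rw [height, hrows, Set.ncard_Icc_nat]
  omega

theorem neg_one_pow_height_mul_pet {k n : ℕ} {lp la : Partition} (h1 : lp.parts 0 < k)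
    (hr : IsRimHook lp la n) (hd : k ∣ n) (hn : n ≠ 0) (hpa : pet k la ≠ 0) :
    (-1 : ℤ) ^ height lp la * pet k la = -pet k lp := by
  have hk : 0 < k := by omega
  obtain ⟨s, t, hst, htN, hrows⟩ := hr.exists_rows_eq_Icc hn
  set N := length lp
  set a : Fin N → ℤ := fun i => lp.windowStart i
  set s' : Fin N := ⟨s, hst.trans_lt htN⟩
  set g := lp.windowStart s + n
  have hsign : (windowMatrix k fun i : Fin N => la.windowStart i).det =
      (-1) ^ (t - s) * (windowMatrix k (Function.update a s' g)).det := by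
    rw [hr.windowStart_eq_update_comp_cycleIcc hrows hst htN]
    change ((windowMatrix k (Function.update a s' g)).submatrix _ id).det = _
    rw [Matrix.det_permute, Fin.sign_cycleIcc_of_le (Fin.mk_le_mk.mpr hst)]
    simp
  rw [pet_eq_det_windowMatrix hk hr.length_le, hsign] at hpa ⊢
  rw [height_eq_sub hrows, ← mul_assoc, ← pow_add, Even.neg_one_pow ⟨_, rfl⟩, one_mul,
    pet_eq_det_windowMatrix hk le_rfl]
  have haW : ∀ i, a i ∈ Ioo (-(k : ℤ)) N := fun i => by
    have := lp.antitone (Nat.zero_le i)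
    simp only [a, Partition.windowStart, mem_Ioo]
    omega
  have hglast : g = la.windowStart t := (hr.windowStart_last hrows hst).symm
  refine det_windowMatrix_update_eq_neg hk (lp.windowStart_strictMono.injective.comp
    Fin.val_injective) haW ?_ ?_ (by simpa [g, s', a] using hn) (right_ne_zero_of_mul hpa)
  · have has := mem_Ioo.mp (haW s')
    have hgt : g ≤ t := by
      rw [hglast, Partition.windowStart]
      omega
    have : g = a s' + n := rfl
    rw [mem_Ioo]
    omega
  · exact (Int.modEq_iff_dvd.mpr (by simpa [g, s', a] using Int.natCast_dvd_natCast.mpr hd)).symm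

theorem signed_contributions_agree_general (k n : ℕ) (la mu : Partition)
    (hpa : pet k la ≠ 0) (hpb : pet k mu ≠ 0)
    (lp : Partition) (h1 : lp.parts 0 < k)
    (hr1 : IsRimHook lp la n) (hr2 : IsRimHook lp mu n) (hd : k ∣ n) :
    (-1 : ℤ) ^ height lp la * pet k la = (-1 : ℤ) ^ height lp mu * pet k mu := by
  by_cases hn : n = 0
  · rw [(hr1.size_eq_zero_iff).mp hn, (hr2.size_eq_zero_iff).mp hn]
  · rw [neg_one_pow_height_mul_pet h1 hr1 hd hn hpa, neg_one_pow_height_mul_pet h1 hr2 hd hn hpb]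

/-- for `k ≥ 3`, distinct `λ, μ ⊢ m` with nonzero Petrie
numbers, and `λ⁺` with `λ⁺_1 < k` such that both `λ⁺/λ` and `λ⁺/μ` are rim
hooks of size `n`: if `k ∣ n` then the two signed contributions agree. -/
theorem signed_contributions_agree (k m n : ℕ) (hk : 3 ≤ k) (la mu : Partition)
    (hla : psize la = m) (hmu : psize mu = m) (hne : la ≠ mu)
    (hpa : pet k la ≠ 0) (hpb : pet k mu ≠ 0)
    (lp : Partition) (h1 : lp.parts 0 < k)
    (hr1 : IsRimHook lp la n) (hr2 : IsRimHook lp mu n) (hd : k ∣ n) :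
    (-1 : ℤ) ^ height lp la * pet k la = (-1 : ℤ) ^ height lp mu * pet k mu :=
  signed_contributions_agree_general k n la mu hpa hpb lp h1 hr1 hr2 hd

end Petrie
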